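/- For every facility i ∈ F, the probability (over the random exponential clocks) that facility i is opened by the rounding algorithm is at most y_i; moreover, if i has at least one neighbor in the support graph, this probability equals y_i. -/

import Mathlib

/-!
Opening `i` means: some client `j` adjacent to `i` has the first-ringing clock among the
neighbours of `i`, and `i` has the first-ringing clock among the neighbours of `j`. Ties have
probability zero, so these events for distinct `j` partition the opening event up to a null set.
The first event only involves client clocks and the second only facility clocks, so they are
independent. In an exponential race the clock of rate `r i` rings first with probability
`r i / ∑ r`; since the facility rates around `j` sum to one, the second event has probability
`y i`, and summing over `j` gives `y i · ∑_j P(j rings first) = y i`.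
-/

open MeasureTheory ProbabilityTheory

namespace DFL4

noncomputable section

variable {F C : Type*}

/-- Facilities fractionally serving client `j` (neighborhood of `j` in the support graph). -/
def facNbrs [Fintype F] (x : F → C → ℝ) (j : C) : Finset F :=
  Finset.univ.filter fun i => 0 < x i j

/-- Clients fractionally served by facility `i` (neighborhood of `i` in the support graph). -/
def cliNbrs [Fintype C] (x : F → C → ℝ) (i : F) : Finset C :=
  Finset.univ.filter fun j => 0 < x i j

/-- An element of a nonempty finset minimizing `f`. -/
def argminOn {α : Type*} (f : α → ℝ) (s : Finset α) (h : s.Nonempty) : α :=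
  Classical.choose (s.exists_min_image f h)

/-- The connection graph: every vertex points to the neighbor (in the support graph of `x`)
with the smallest clock value (`Q` on facilities, `R` on clients). -/
def nextV [Fintype F] [Fintype C] (x : F → C → ℝ) (Q : F → ℝ) (R : C → ℝ) :
    F ⊕ C → Option (F ⊕ C)
  | Sum.inl i =>
    if h : (cliNbrs x i).Nonempty then some (Sum.inr (argminOn R _ h)) else none
  | Sum.inr j =>
    if h : (facNbrs x j).Nonempty then some (Sum.inl (argminOn Q _ h)) else none

/-- Follow `next`, accumulating visited vertices and stopping just before revisiting one. -/
def pathAux {α : Type*} [DecidableEq α] (next : α → Option α) :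
    ℕ → List α → α → List α
  | 0, vis, v => vis ++ [v]
  | n+1, vis, v =>
    match next v with
    | none => vis ++ [v]
    | some w => if w ∈ vis ++ [v] then vis ++ [v] else pathAux next n (vis ++ [v]) w

/-- The connection path of client `j`: start at `j` and repeatedly follow the unique outgoing
arc of the connection graph, stopping just before revisiting an already visited vertex. -/
def connPath [Fintype F] [Fintype C] [DecidableEq F] [DecidableEq C]
    (x : F → C → ℝ) (Q : F → ℝ) (R : C → ℝ) (j : C) : List (F ⊕ C) :=
  pathAux (nextV x Q R) (Fintype.card F + Fintype.card C) List.nil (Sum.inr j)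

/-- The path `p` traverses the arc `(u, v)`. -/
def traverses {α : Type*} (p : List α) (u v : α) : Prop :=
  ∃ l1 l2 : List α, p = l1 ++ u :: v :: l2

/-- The last facility on a path: the facility to which a client is assigned. -/
def assignedFac (p : List (F ⊕ C)) : Option F :=
  p.reverse.findSome? Sum.getLeft?

/-- Facility `i` lies on a 2-cycle of the connection graph, i.e. it is opened. -/
def opens [Fintype F] [Fintype C] (x : F → C → ℝ) (Q : F → ℝ) (R : C → ℝ) (i : F) : Prop :=
  ∃ j : C, nextV x Q R (Sum.inl i) = some (Sum.inr j) ∧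
    nextV x Q R (Sum.inr j) = some (Sum.inl i)

/-- A preprocessed fractional solution: `x i j ∈ {0, y i}`, `y i ∈ [0,1]`, and every client is
fully fractionally connected. -/
def Preprocessed [Fintype F] (x : F → C → ℝ) (y : F → ℝ) : Prop :=
  (∀ i j, x i j = 0 ∨ x i j = y i) ∧ (∀ i, y i ∈ Set.Icc (0:ℝ) 1) ∧ (∀ j, ∑ i, x i j = 1)

end

end DFL4

open Real Set

lemma Finset.measurable_inf' {ι δ α : Type*} [MeasurableSpace δ] [SemilatticeInf α]
    [MeasurableSpace α] [MeasurableInf₂ α] {s : Finset ι} (hs : s.Nonempty) {f : ι → δ → α}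
    (hf : ∀ i ∈ s, Measurable (f i)) : Measurable (s.inf' hs f) :=
  Finset.inf'_induction hs _ (fun _ hf _ hg => hf.inf hg) hf

lemma IsMinOn.lt_of_injOn {α β : Type*} [DecidableEq α] [LinearOrder β] {f : α → β}
    {s : Finset α} {a : α} (hmin : IsMinOn f s a) (hinj : Set.InjOn f s) (ha : a ∈ s) :
    ∀ k ∈ s.erase a, f a < f k := fun _ hk =>
  (hmin (Finset.mem_of_mem_erase hk)).lt_of_ne fun heq =>
    Finset.ne_of_mem_erase hk (hinj (Finset.mem_of_mem_erase hk) ha heq.symm)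

namespace ProbabilityTheory

variable {ι Ω : Type*}

def strictMinEvent [DecidableEq ι] (X : ι → Ω → ℝ) (s : Finset ι) (i : ι) : Set Ω :=
  {ω | ∀ k ∈ s.erase i, X i ω < X k ω}

section StrictMinEvent

variable [DecidableEq ι] {X : ι → Ω → ℝ} {s : Finset ι}

lemma measurableSet_strictMinEvent {m : MeasurableSpace Ω} {i : ι} (hi : i ∈ s)
    (hX : ∀ k ∈ s, Measurable[m] (X k)) : MeasurableSet[m] (strictMinEvent X s i) := by
  simp only [strictMinEvent, ofPred_forall]
  exact Finset.measurableSet_biInter _ fun k hk =>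
    measurableSet_lt (hX i hi) (hX k (Finset.mem_of_mem_erase hk))

lemma pairwiseDisjoint_strictMinEvent : (s : Set ι).PairwiseDisjoint (strictMinEvent X s) :=
  fun i hi k hk hik => disjoint_left.2 fun _ hωi hωk =>
    (hωi k (Finset.mem_erase.2 ⟨hik.symm, hk⟩)).not_gt (hωk i (Finset.mem_erase.2 ⟨hik, hi⟩))

lemma strictMinEvent_subtype {p : ι → Prop} [DecidablePred p] (hs : ∀ k ∈ s, p k) {i : ι}
    (hi : p i) :
    strictMinEvent (fun k : Subtype p => X k) (s.subtype p) ⟨i, hi⟩ = strictMinEvent X s i := by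
  ext ω
  simp only [strictMinEvent, mem_ofPred_eq, Finset.mem_erase, Finset.mem_subtype, ne_eq,
    Subtype.forall, Subtype.mk.injEq]
  exact ⟨fun h k hk => h k (hs k hk.2) hk, fun h k _ hk => h k hk⟩

end StrictMinEvent

variable [MeasurableSpace Ω] {μ : Measure Ω}

instance nullSingletonClass_expMeasure (r : ℝ) : NullSingletonClass (expMeasure r) := by
  unfold expMeasure gammaMeasure
  infer_instance

-- The `max` makes the formula valid for `c < 0` too, where the survival function is `1`.
lemma expMeasure_Ioi {r : ℝ} (hr : 0 < r) (c : ℝ) :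
    expMeasure r (Ioi c) = ENNReal.ofReal (exp (-(r * max c 0))) := by
  have := isProbabilityMeasure_expMeasure hr
  rw [← compl_Iic, prob_compl_eq_one_sub measurableSet_Iic, ← ofReal_cdf, cdf_expMeasure_eq hr]
  split_ifs with hc
  · have hexp : exp (-(r * c)) ≤ 1 := exp_le_one_iff.2 (by nlinarith)
    rw [max_eq_left hc, ← ENNReal.ofReal_one, ← ENNReal.ofReal_sub _ (by linarith)]
    ring_nf
  · simp [max_eq_right (le_of_not_ge hc)]

lemma lintegral_expMeasure_Ioi {a b : ℝ} (ha : 0 < a) (hb : 0 < b) :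
    ∫⁻ q, expMeasure b (Ioi q) ∂expMeasure a = ENNReal.ofReal (a / (a + b)) := by
  have hdensity : ∀ q, exponentialPDF a q * expMeasure b (Ioi q)
      = ENNReal.ofReal (a / (a + b)) * exponentialPDF (a + b) q := by
    intro q
    rcases lt_or_ge q 0 with hq | hq
    · simp [exponentialPDF_of_neg hq]
    · rw [exponentialPDF_of_nonneg hq, exponentialPDF_of_nonneg hq, expMeasure_Ioi hb,
        max_eq_left hq, ← ENNReal.ofReal_mul (by positivity),
        ← ENNReal.ofReal_mul (by positivity)]
      congr 1
      rw [mul_assoc, ← exp_add, ← mul_assoc, div_mul_cancel₀ _ (by positivity)]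
      ring_nf
  calc ∫⁻ q, expMeasure b (Ioi q) ∂expMeasure a
      = ∫⁻ q, exponentialPDF a q * expMeasure b (Ioi q) :=
        lintegral_withDensity_eq_lintegral_mul_non_measurable _
          (measurable_exponentialPDFReal a).ennreal_ofReal
          (.of_forall fun _ => ENNReal.ofReal_lt_top) _
    _ = ENNReal.ofReal (a / (a + b)) * ∫⁻ q, exponentialPDF (a + b) q := by
        simp_rw [hdensity]
        exact lintegral_const_mul _ (measurable_exponentialPDFReal _).ennreal_ofReal
    _ = ENNReal.ofReal (a / (a + b)) := by
        rw [lintegral_exponentialPDF_eq_one (by positivity), mul_one]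

lemma IndepFun.measure_preimage_prodMk [IsFiniteMeasure μ] {β γ : Type*} [MeasurableSpace β]
    [MeasurableSpace γ] {X : Ω → β} {Y : Ω → γ} (hX : Measurable X) (hY : Measurable Y)
    (hXY : IndepFun X Y μ) {S : Set (β × γ)} (hS : MeasurableSet S) :
    μ ((fun ω => (X ω, Y ω)) ⁻¹' S) = ((μ.map X).prod (μ.map Y)) S := by
  rw [← Measure.map_apply (hX.prodMk hY) hS,
    (indepFun_iff_map_prod_eq_prod_map_map hX.aemeasurable hY.aemeasurable).1 hXY]

lemma IndepFun.measure_eq_eq_zero [IsFiniteMeasure μ] {X Y : Ω → ℝ} (hX : Measurable X)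
    (hY : Measurable Y) (hXY : IndepFun X Y μ) [NullSingletonClass (μ.map X)] :
    μ {ω | X ω = Y ω} = 0 := by
  have hdiag : MeasurableSet {p : ℝ × ℝ | p.1 = p.2} :=
    measurableSet_eq_fun measurable_fst measurable_snd
  change μ ((fun ω => (X ω, Y ω)) ⁻¹' {p | p.1 = p.2}) = 0
  rw [hXY.measure_preimage_prodMk hX hY hdiag, Measure.prod_apply_symm hdiag]
  simp

lemma IndepFun.measure_lt_of_expMeasure [IsFiniteMeasure μ] {X Y : Ω → ℝ}
    (hX : Measurable X) (hY : Measurable Y) (hXY : IndepFun X Y μ) {a b : ℝ} (ha : 0 < a)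
    (hb : 0 < b) (hlawX : μ.map X = expMeasure a) (hlawY : μ.map Y = expMeasure b) :
    μ {ω | X ω < Y ω} = ENNReal.ofReal (a / (a + b)) := by
  have := isProbabilityMeasure_expMeasure hb
  have hlt : MeasurableSet {p : ℝ × ℝ | p.1 < p.2} :=
    measurableSet_lt measurable_fst measurable_snd
  change μ ((fun ω => (X ω, Y ω)) ⁻¹' {p | p.1 < p.2}) = _
  rw [hXY.measure_preimage_prodMk hX hY hlt, hlawX, hlawY, Measure.prod_apply hlt]
  exact lintegral_expMeasure_Ioi ha hb

lemma iIndepFun.measure_inter_eq_mul_of_sum {κ β : Type*} [mβ : MeasurableSpace β]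
    {G : ι ⊕ κ → Ω → β} (hG : ∀ v, Measurable (G v)) (h : iIndepFun G μ) {A B : Set Ω}
    (hA : MeasurableSet[⨆ i, mβ.comap (G (.inl i))] A)
    (hB : MeasurableSet[⨆ k, mβ.comap (G (.inr k))] B) : μ (A ∩ B) = μ A * μ B := by
  have hindep := indep_iSup_of_disjoint (fun v => (hG v).comap_le)
    ((iIndepFun_iff_iIndep _ _ _).1 h) isCompl_range_inl_range_inr.disjoint
  rw [iSup_range, iSup_range] at hindep
  exact (Indep_iff _ _ _).1 hindep A B hA hB

lemma iIndepFun.indepFun_finsetInf' {X : ι → Ω → ℝ} (h : iIndepFun X μ)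
    (hX : ∀ i, Measurable (X i)) {t : Finset ι} (ht : t.Nonempty) {i : ι} (hi : i ∉ t) :
    IndepFun (X i) (t.inf' ht X) μ := by
  have hinf : t.inf' ht X = (fun p : t → ℝ => t.attach.inf' ht.attach p) ∘ fun ω k => X k ω := by
    ext ω
    simp only [Function.comp_apply, Finset.inf'_apply]
    exact le_antisymm (Finset.le_inf' _ _ fun k _ => Finset.inf'_le _ k.2)
      (Finset.le_inf' _ _ fun k hk => Finset.inf'_le_of_le _ (Finset.mem_attach _ ⟨k, hk⟩) le_rfl)
  have hmeas : Measurable fun p : t → ℝ => t.attach.inf' ht.attach p := by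
    convert Finset.measurable_inf' ht.attach fun k _ => measurable_pi_apply (X := fun _ : t => ℝ) k
    rw [Finset.inf'_apply]
  rw [hinf]
  exact (h.indepFun_finset {i} t (Finset.disjoint_singleton_left.2 hi) hX).comp
    (measurable_pi_apply ⟨i, Finset.mem_singleton_self i⟩) hmeas

structure IsExpClocks (X : ι → Ω → ℝ) (r : ι → ℝ) (μ : Measure Ω) : Prop where
  measurable : ∀ i, Measurable (X i)
  indep : iIndepFun X μ
  rate_pos : ∀ i, 0 < r i
  map_eq : ∀ i, μ.map (X i) = expMeasure (r i)

namespace IsExpClocks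

variable {X : ι → Ω → ℝ} {r : ι → ℝ}

lemma precomp {κ : Type*} (h : IsExpClocks X r μ) {g : κ → ι} (hg : g.Injective) :
    IsExpClocks (fun k => X (g k)) (fun k => r (g k)) μ where
  measurable k := h.measurable (g k)
  indep := h.indep.precomp hg
  rate_pos k := h.rate_pos (g k)
  map_eq k := h.map_eq (g k)

variable [IsProbabilityMeasure μ]

lemma ae_injective [Countable ι] (h : IsExpClocks X r μ) :
    ∀ᵐ ω ∂μ, Function.Injective fun i => X i ω := by
  refine measure_mono_null (t := ⋃ i, ⋃ k, {ω | i ≠ k ∧ X i ω = X k ω}) (fun ω hω => ?_)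
    (measure_iUnion_null fun i => measure_iUnion_null fun k => ?_)
  · obtain ⟨i, k, heq, hne⟩ : ∃ i k, X i ω = X k ω ∧ i ≠ k := by
      simpa [Function.Injective] using hω
    exact mem_iUnion₂.2 ⟨i, k, hne, heq⟩
  by_cases hik : i = k
  · simp [hik]
  · have : NullSingletonClass (μ.map (X i)) := h.map_eq i ▸ inferInstance
    simpa [hik] using
      (h.indep.indepFun hik).measure_eq_eq_zero (h.measurable i) (h.measurable k)

lemma map_inf' (h : IsExpClocks X r μ) {t : Finset ι} (ht : t.Nonempty) :
    μ.map (t.inf' ht X) = expMeasure (∑ i ∈ t, r i) := by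
  have hb : 0 < ∑ i ∈ t, r i := Finset.sum_pos (fun i _ => h.rate_pos i) ht
  have := isProbabilityMeasure_expMeasure hb
  have hM : Measurable (t.inf' ht X) := Finset.measurable_inf' ht fun i _ => h.measurable i
  have := Measure.isProbabilityMeasure_map (μ := μ) hM.aemeasurable
  refine Measure.ext_of_Iic _ _ fun c => ?_
  rw [← compl_Ioi, prob_compl_eq_one_sub measurableSet_Ioi,
    prob_compl_eq_one_sub measurableSet_Ioi, Measure.map_apply hM measurableSet_Ioi,
    expMeasure_Ioi hb]
  have hsurvival : t.inf' ht X ⁻¹' Ioi c = ⋂ i ∈ t, X i ⁻¹' Ioi c := by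
    ext ω
    simp [Finset.inf'_apply, Finset.lt_inf'_iff]
  rw [hsurvival, h.indep.measure_inter_preimage_eq_mul t fun _ _ => measurableSet_Ioi]
  have hfactor : ∀ i ∈ t, μ (X i ⁻¹' Ioi c) = ENNReal.ofReal (exp (-(r i * max c 0))) :=
    fun i _ => by
      rw [← Measure.map_apply (h.measurable i) measurableSet_Ioi, h.map_eq i,
        expMeasure_Ioi (h.rate_pos i)]
  rw [Finset.prod_congr rfl hfactor, ← ENNReal.ofReal_prod_of_nonneg fun _ _ => (exp_pos _).le,
    ← exp_sum, Finset.sum_mul, ← Finset.sum_neg_distrib]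

lemma measure_strictMinEvent [DecidableEq ι] (h : IsExpClocks X r μ) {s : Finset ι} {i : ι}
    (hi : i ∈ s) : μ (strictMinEvent X s i) = ENNReal.ofReal (r i / ∑ k ∈ s, r k) := by
  rw [← Finset.add_sum_erase s r hi]
  rcases (s.erase i).eq_empty_or_nonempty with hrest | hrest
  · simp [strictMinEvent, hrest, (h.rate_pos i).ne']
  have hindep : IndepFun (X i) ((s.erase i).inf' hrest X) μ :=
    h.indep.indepFun_finsetInf' h.measurable hrest (s.notMem_erase i)
  have hevent : strictMinEvent X s i = {ω | X i ω < (s.erase i).inf' hrest X ω} := by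
    ext ω
    simp [strictMinEvent, Finset.inf'_apply, Finset.lt_inf'_iff]
  rw [hevent, hindep.measure_lt_of_expMeasure (h.measurable i)
    (Finset.measurable_inf' hrest fun k _ => h.measurable k) (h.rate_pos i)
    (Finset.sum_pos (fun k _ => h.rate_pos k) hrest) (h.map_eq i) (h.map_inf' hrest)]

lemma sum_measure_strictMinEvent [DecidableEq ι] (h : IsExpClocks X r μ) {s : Finset ι}
    (hs : s.Nonempty) : ∑ i ∈ s, μ (strictMinEvent X s i) = 1 := by
  have hsum : 0 < ∑ k ∈ s, r k := Finset.sum_pos (fun k _ => h.rate_pos k) hs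
  rw [Finset.sum_congr rfl fun i hi => h.measure_strictMinEvent hi,
    ← ENNReal.ofReal_sum_of_nonneg fun i _ => div_nonneg (h.rate_pos i).le hsum.le,
    ← Finset.sum_div, div_self hsum.ne', ENNReal.ofReal_one]

end IsExpClocks

end ProbabilityTheory

namespace DFL4

section Rounding

variable {F C : Type*}

lemma mem_facNbrs [Fintype F] {x : F → C → ℝ} {i : F} {j : C} :
    i ∈ facNbrs x j ↔ 0 < x i j := by
  simp [facNbrs]

lemma mem_cliNbrs [Fintype C] {x : F → C → ℝ} {i : F} {j : C} :
    j ∈ cliNbrs x i ↔ 0 < x i j := by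
  simp [cliNbrs]

namespace Preprocessed

variable [Fintype F] {x : F → C → ℝ} {y : F → ℝ}

lemma eq_of_pos (h : Preprocessed x y) {i : F} {j : C} (hij : 0 < x i j) : x i j = y i :=
  (h.1 i j).resolve_left hij.ne'

lemma pos_of_mem_facNbrs (h : Preprocessed x y) {i : F} {j : C} (hi : i ∈ facNbrs x j) :
    0 < y i := by
  have hij := mem_facNbrs.1 hi
  exact h.eq_of_pos hij ▸ hij

lemma sum_facNbrs (h : Preprocessed x y) (j : C) : ∑ i ∈ facNbrs x j, y i = 1 := by
  rw [← h.2.2 j, facNbrs, Finset.sum_filter]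
  refine Finset.sum_congr rfl fun i _ => ?_
  split_ifs with hij
  · exact (h.eq_of_pos hij).symm
  · rcases h.1 i j with h0 | hy
    · exact h0.symm
    · exact le_antisymm (hy ▸ (h.2.1 i).1) (not_lt.1 hij)

end Preprocessed

lemma argminOn_mem {α : Type*} (f : α → ℝ) (s : Finset α) (h : s.Nonempty) :
    argminOn f s h ∈ s :=
  (Classical.choose_spec (s.exists_min_image f h)).1

lemma isMinOn_argminOn {α : Type*} (f : α → ℝ) (s : Finset α) (h : s.Nonempty) :
    IsMinOn f s (argminOn f s h) :=
  fun b hb => (Classical.choose_spec (s.exists_min_image f h)).2 b hb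

lemma argminOn_eq_of_lt {α : Type*} [DecidableEq α] {f : α → ℝ} {s : Finset α} {b : α}
    (hb : b ∈ s) (hlt : ∀ c ∈ s.erase b, f b < f c) : argminOn f s ⟨b, hb⟩ = b := by
  by_contra hne
  exact (isMinOn_argminOn f s ⟨b, hb⟩ hb).not_gt
    (hlt _ (Finset.mem_erase.2 ⟨hne, argminOn_mem f s _⟩))

section ConnectionGraph

variable [Fintype F] [Fintype C] {x : F → C → ℝ} {Q : F → ℝ} {R : C → ℝ} {i : F}

lemma exists_isMinOn_of_opens (h : opens x Q R i) :
    ∃ j ∈ cliNbrs x i, IsMinOn R (cliNbrs x i) j ∧ IsMinOn Q (facNbrs x j) i := by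
  obtain ⟨j, hij, hji⟩ := h
  simp only [nextV] at hij hji
  split_ifs at hij hji with hs hf
  obtain rfl : argminOn R _ hs = j := by simpa using hij
  have hi : argminOn Q _ hf = i := by simpa using hji
  have hQmin := isMinOn_argminOn Q _ hf
  rw [hi] at hQmin
  exact ⟨_, argminOn_mem R _ hs, isMinOn_argminOn R _ hs, hQmin⟩

lemma opens_iff_exists_strictMin [DecidableEq F] [DecidableEq C]
    (hR : Set.InjOn R (cliNbrs x i)) (hQ : ∀ j ∈ cliNbrs x i, Set.InjOn Q (facNbrs x j)) :
    opens x Q R i ↔ ∃ j ∈ cliNbrs x i,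
      (∀ k ∈ (cliNbrs x i).erase j, R j < R k) ∧ ∀ k ∈ (facNbrs x j).erase i, Q i < Q k := by
  constructor
  · intro h
    obtain ⟨j, hj, hRmin, hQmin⟩ := exists_isMinOn_of_opens h
    exact ⟨j, hj, hRmin.lt_of_injOn hR hj,
      hQmin.lt_of_injOn (hQ j hj) (mem_facNbrs.2 (mem_cliNbrs.1 hj))⟩
  · rintro ⟨j, hj, hRj, hQi⟩
    have hi : i ∈ facNbrs x j := mem_facNbrs.2 (mem_cliNbrs.1 hj)
    refine ⟨j, ?_, ?_⟩
    · simp only [nextV, argminOn_eq_of_lt hj hRj]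
      exact dif_pos ⟨j, hj⟩
    · simp only [nextV, argminOn_eq_of_lt hi hQi]
      exact dif_pos ⟨i, hi⟩

end ConnectionGraph

section Probability

variable {Ω : Type*} [MeasurableSpace Ω] {μ : Measure Ω} [IsProbabilityMeasure μ]

lemma measure_strictMinEvent_facNbrs [Fintype F] [DecidableEq F] {x : F → C → ℝ} {y : F → ℝ}
    (hxy : Preprocessed x y) {Q : F → Ω → ℝ}
    (hQ : IsExpClocks (fun i : {i // 0 < y i} => Q i.1) (fun i => y i.1) μ) {i : F} {j : C}
    (hi : i ∈ facNbrs x j) : μ (strictMinEvent Q (facNbrs x j) i) = ENNReal.ofReal (y i) := by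
  have hpos : ∀ k ∈ facNbrs x j, 0 < y k := fun k hk => hxy.pos_of_mem_facNbrs hk
  rw [← strictMinEvent_subtype hpos (hpos i hi),
    hQ.measure_strictMinEvent (Finset.mem_subtype.2 hi), Finset.sum_subtype_of_mem y hpos,
    hxy.sum_facNbrs, div_one]

lemma measure_opens_eq [Fintype F] [Fintype C] [DecidableEq F] [DecidableEq C]
    {x : F → C → ℝ} {y : F → ℝ} (hxy : Preprocessed x y) {Q : F → Ω → ℝ} {R : C → Ω → ℝ}
    (hclocks : IsExpClocks (fun v : {i // 0 < y i} ⊕ C => Sum.elim (fun i => Q i.1) R v)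
      (Sum.elim (fun i => y i.1) 1) μ) {i₀ : F} (hs : (cliNbrs x i₀).Nonempty) :
    μ {ω | opens x (fun i => Q i ω) (fun j => R j ω) i₀} = ENNReal.ofReal (y i₀) := by
  set s := cliNbrs x i₀
  set A := fun j => strictMinEvent R s j
  set B := fun j => strictMinEvent Q (facNbrs x j) i₀
  have hR : IsExpClocks R 1 μ := hclocks.precomp Sum.inr_injective
  have hi₀ : ∀ {j}, j ∈ s → i₀ ∈ facNbrs x j := fun hj => mem_facNbrs.2 (mem_cliNbrs.1 hj)
  have hpos : ∀ {i j}, i ∈ facNbrs x j → 0 < y i := hxy.pos_of_mem_facNbrs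
  have hmeasAB : ∀ j ∈ s, MeasurableSet (A j ∩ B j) := fun j hj =>
    (measurableSet_strictMinEvent hj fun k _ => hR.measurable k).inter
      (measurableSet_strictMinEvent (hi₀ hj) fun k hk => hclocks.measurable (.inl ⟨k, hpos hk⟩))
  have hindep : ∀ j ∈ s, μ (A j ∩ B j) = μ (A j) * μ (B j) := fun j hj => by
    rw [inter_comm, mul_comm]
    refine hclocks.indep.measure_inter_eq_mul_of_sum hclocks.measurable
      (measurableSet_strictMinEvent (hi₀ hj) fun k hk => Measurable.of_comap_le ?_)
      (measurableSet_strictMinEvent hj fun k _ => Measurable.of_comap_le ?_)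
    · exact le_iSup (fun i : {i // 0 < y i} => MeasurableSpace.comap (Q i.1) _) ⟨k, hpos hk⟩
    · exact le_iSup (fun k => MeasurableSpace.comap (R k) _) k
  have hae : {ω | opens x (fun i => Q i ω) (fun j => R j ω) i₀} =ᵐ[μ] ⋃ j ∈ s, A j ∩ B j := by
    refine Filter.eventuallyEq_set.2 ?_
    filter_upwards [hclocks.ae_injective] with ω hinj
    have hRinj : InjOn (fun j => R j ω) s := (hinj.comp Sum.inr_injective).injOn
    have hQinj : ∀ j ∈ s, InjOn (fun i => Q i ω) (facNbrs x j) := fun j _ a ha b hb hab => by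
      simpa using hinj (a₁ := .inl ⟨a, hpos ha⟩) (a₂ := .inl ⟨b, hpos hb⟩) hab
    rw [opens_iff_exists_strictMin hRinj hQinj, mem_iUnion₂]
    simp only [exists_prop]
    rfl
  calc μ {ω | opens x (fun i => Q i ω) (fun j => R j ω) i₀}
      = ∑ j ∈ s, μ (A j ∩ B j) := by
        rw [measure_congr hae, measure_biUnion_finset
          (fun j _ k _ hjk => (pairwiseDisjoint_strictMinEvent ‹_› ‹_› hjk).mono
            inter_subset_left inter_subset_left) hmeasAB]
    _ = ∑ j ∈ s, μ (A j) * ENNReal.ofReal (y i₀) := Finset.sum_congr rfl fun j hj => by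
        rw [hindep j hj, measure_strictMinEvent_facNbrs hxy
          (hclocks.precomp Sum.inl_injective) (hi₀ hj)]
    _ = ENNReal.ofReal (y i₀) := by
        rw [← Finset.sum_mul, hR.sum_measure_strictMinEvent hs, one_mul]

end Probability

end Rounding

theorem opening_probability_general
    {F C : Type*} [Fintype F] [Fintype C]
    (x : F → C → ℝ) (y : F → ℝ) (hxy : Preprocessed x y)
    {Ω : Type*} [MeasurableSpace Ω] (μ : Measure Ω) [IsProbabilityMeasure μ]
    (Q : F → Ω → ℝ) (R : C → Ω → ℝ)
    (hQmeas : ∀ i : F, 0 < y i → Measurable (Q i))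
    (hRmeas : ∀ j : C, Measurable (R j))
    (hindep : iIndepFun
      (fun v : {i : F // 0 < y i} ⊕ C => Sum.elim (fun i => Q i.1) R v) μ)
    (hQdist : ∀ i : F, (h : 0 < y i) → Measure.map (Q i) μ = expMeasure (y i))
    (hRdist : ∀ j : C, Measure.map (R j) μ = expMeasure 1)
    (i₀ : F) :
    (μ {ω | opens x (fun i => Q i ω) (fun j => R j ω) i₀}).toReal ≤ y i₀ ∧
    ((cliNbrs x i₀).Nonempty →
      (μ {ω | opens x (fun i => Q i ω) (fun j => R j ω) i₀}).toReal = y i₀) := by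
  classical
  have hclocks : IsExpClocks (fun v : {i // 0 < y i} ⊕ C => Sum.elim (fun i => Q i.1) R v)
      (Sum.elim (fun i => y i.1) 1) μ :=
    ⟨by rintro (⟨i, hi⟩ | j); exacts [hQmeas i hi, hRmeas j], hindep,
      by rintro (⟨i, hi⟩ | j); exacts [hi, one_pos],
      by rintro (⟨i, hi⟩ | j); exacts [hQdist i hi, hRdist j]⟩
  have hy : 0 ≤ y i₀ := (hxy.2.1 i₀).1
  have heq : (cliNbrs x i₀).Nonempty →
      (μ {ω | opens x (fun i => Q i ω) (fun j => R j ω) i₀}).toReal = y i₀ := fun hs => by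
    rw [measure_opens_eq hxy hclocks hs, ENNReal.toReal_ofReal hy]
  refine ⟨?_, heq⟩
  rcases (cliNbrs x i₀).eq_empty_or_nonempty with hs | hs
  · have hnever : {ω | opens x (fun i => Q i ω) (fun j => R j ω) i₀} = ∅ :=
      eq_empty_of_forall_notMem fun ω hω => by
        obtain ⟨j, hj, -⟩ := exists_isMinOn_of_opens hω
        simp [hs] at hj
    simpa [hnever] using hy
  · exact (heq hs).le

/-- The probability that the rounding algorithm opens facility `i₀` is at most `y i₀`, with
equality when `i₀` has a neighbor in the support graph. -/
theorem opening_probability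
    {F C : Type*} [Fintype F] [Fintype C] [DecidableEq F] [DecidableEq C]
    (x : F → C → ℝ) (y : F → ℝ) (hxy : Preprocessed x y)
    {Ω : Type*} [MeasurableSpace Ω] (μ : Measure Ω) [IsProbabilityMeasure μ]
    (Q : F → Ω → ℝ) (R : C → Ω → ℝ)
    (hQmeas : ∀ i : F, 0 < y i → Measurable (Q i))
    (hRmeas : ∀ j : C, Measurable (R j))
    (hindep : iIndepFun
      (fun v : {i : F // 0 < y i} ⊕ C => Sum.elim (fun i => Q i.1) R v) μ)
    (hQdist : ∀ i : F, (h : 0 < y i) → Measure.map (Q i) μ = expMeasure (y i))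
    (hRdist : ∀ j : C, Measure.map (R j) μ = expMeasure 1)
    (i₀ : F) :
    (μ {ω | opens x (fun i => Q i ω) (fun j => R j ω) i₀}).toReal ≤ y i₀ ∧
    ((cliNbrs x i₀).Nonempty →
      (μ {ω | opens x (fun i => Q i ω) (fun j => R j ω) i₀}).toReal = y i₀) :=
  opening_probability_general x y hxy μ Q R hQmeas hRmeas hindep hQdist hRdist i₀

end DFL4
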